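/- arXiv:1605.01231 — 2 statements merged into one kernel-verified Lean document; each statement's English description precedes it below -/
import Mathlib

section
/- Let G be a simple graph that is hamiltonian-connected. Then for every subset X of the vertices of G such that the graph G − X obtained by deleting the vertices of X has at least 2 connected components, the number of connected components of G − X is at most |X| − 1. Equivalently, if there exists a vertex subset X such that G − X has at least 2 connected components and the number of components of G − X is at least |X|, then G is not hamiltonian-connected. -/
/-!
Follow a Hamiltonian path from `u` to `v`. For each component of `G − X`, the vertex after
the last visit of the path to it lies in `X`, unless that visit is the end `v`; distinct
components give distinct such vertices, none of which is `u`. So `G − X` has at most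
`|X \ {u}| + [v ∉ X]` components. If `|X| ≥ 2`, take `u ≠ v` both in `X`, which gives `|X| − 1`;
if `|X| ≤ 1`, take `v` outside `X` and `u` with `X ⊆ {u}`, which gives a single component.
-/

open SimpleGraph

/-- A graph is hamiltonian-connected if every pair of distinct vertices is joined
by a Hamiltonian path. -/
def HamiltonianConnected {V : Type*} [DecidableEq V] (G : SimpleGraph V) : Prop :=
  ∀ u v : V, u ≠ v → ∃ p : G.Walk u v, p.IsHamiltonian

namespace SimpleGraph

variable {V : Type*} {G : SimpleGraph V} (S : Set V)

theorem ncard_image_connectedComponentMk_setOf_val_eq_le (u : V) [Decidable (u ∈ S)] :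
    ((G.induce S).connectedComponentMk '' {x : S | ↑x = u}).ncard ≤ if u ∈ S then 1 else 0 := by
  split_ifs with hu
  · have : {x : S | ↑x = u} = {⟨u, hu⟩} := by ext; simp [Subtype.ext_iff]
    simp [this]
  · have : {x : S | ↑x = u} = ∅ := by ext x; simpa using fun h : ↑x = u => hu (h ▸ x.2)
    simp [this]

theorem Walk.ncard_image_connectedComponentMk_support_le [DecidablePred (· ∈ S)] {u v : V}
    (p : G.Walk u v) :
    ((G.induce S).connectedComponentMk '' {x : S | ↑x ∈ p.support}).ncard ≤
      (p.support.tail.filter (· ∉ S)).length + if v ∈ S then 1 else 0 := by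
  induction p with
  | nil => simpa using ncard_image_connectedComponentMk_setOf_val_eq_le S _
  | @cons u w v h q ih =>
    have hsplit : {x : S | ↑x ∈ (Walk.cons h q).support} =
        {x : S | ↑x = u} ∪ {x : S | ↑x ∈ q.support} := by
      ext; simp
    have hfilter : ((Walk.cons h q).support.tail.filter (· ∉ S)).length =
        (if w ∈ S then 0 else 1) + (q.support.tail.filter (· ∉ S)).length := by
      rw [Walk.support_cons, List.tail_cons, ← q.cons_tail_support, List.filter_cons]
      split_ifs <;> simp_all [add_comm]
    rw [hsplit, Set.image_union, hfilter]
    by_cases hw : w ∈ S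
    · have hsub : (G.induce S).connectedComponentMk '' {x | ↑x = u} ⊆
          (G.induce S).connectedComponentMk '' {x | ↑x ∈ q.support} := by
        rintro _ ⟨x, rfl : ↑x = u, rfl⟩
        refine ⟨⟨w, hw⟩, q.start_mem_support, ConnectedComponent.sound ?_⟩
        exact (show (G.induce S).Adj x ⟨w, hw⟩ from h).reachable.symm
      simpa [Set.union_eq_right.mpr hsub, hw] using ih
    · calc _ ≤ _ := Set.ncard_union_le _ _
        _ ≤ 1 + ((q.support.tail.filter (· ∉ S)).length + if v ∈ S then 1 else 0) := by
          gcongr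
          exact (ncard_image_connectedComponentMk_setOf_val_eq_le S u).trans (by split_ifs <;> simp)
        _ = _ := by simp only [hw, if_false, add_assoc]

theorem Walk.IsHamiltonian.length_filter_support_tail_le [DecidableEq V] {u v : V}
    {p : G.Walk u v} (hp : p.IsHamiltonian) (X : Finset V) :
    (p.support.tail.filter (· ∈ X)).length ≤ (X.erase u).card := by
  have hnodup : (u :: p.support.tail).Nodup := p.cons_tail_support ▸ hp.isPath.support_nodup
  rw [← List.toFinset_card_of_nodup ((List.nodup_cons.mp hnodup).2.filter _)]
  refine Finset.card_le_card fun x hx => ?_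
  simp only [List.mem_toFinset, List.mem_filter, decide_eq_true_eq] at hx
  exact Finset.mem_erase.mpr ⟨fun hxu => (List.nodup_cons.mp hnodup).1 (hxu ▸ hx.1), hx.2⟩

theorem Walk.IsHamiltonian.card_connectedComponent_induce_compl_le [DecidableEq V] {u v : V}
    {p : G.Walk u v} (hp : p.IsHamiltonian) (X : Finset V) :
    Nat.card (G.induce (↑X : Set V)ᶜ).ConnectedComponent ≤
      (X.erase u).card + if v ∈ X then 0 else 1 := by
  have himage : (G.induce (↑X : Set V)ᶜ).connectedComponentMk '' {x | ↑x ∈ p.support} =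
      Set.univ :=
    Set.eq_univ_of_forall fun C => C.ind fun x => ⟨x, hp.mem_support x, rfl⟩
  calc Nat.card (G.induce (↑X : Set V)ᶜ).ConnectedComponent
      = ((G.induce (↑X : Set V)ᶜ).connectedComponentMk '' {x | ↑x ∈ p.support}).ncard := by
        rw [himage, Set.ncard_univ]
    _ ≤ _ := p.ncard_image_connectedComponentMk_support_le _
    _ ≤ _ := by
      have := hp.length_filter_support_tail_le X
      simp only [Set.mem_compl_iff, Finset.mem_coe, not_not]
      split_ifs <;> omega

end SimpleGraph

theorem stmt_1_general {V : Type*} [DecidableEq V] (G : SimpleGraph V)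
    (hG : HamiltonianConnected G) (X : Finset V)
    (hX : 2 ≤ Nat.card (G.induce ((↑X : Set V)ᶜ)).ConnectedComponent) :
    Nat.card (G.induce ((↑X : Set V)ᶜ)).ConnectedComponent ≤ X.card - 1 ∧
      Nat.card (G.induce ((↑X : Set V)ᶜ)).ConnectedComponent < X.card := by
  suffices h : Nat.card (G.induce ((↑X : Set V)ᶜ)).ConnectedComponent ≤ X.card - 1 from
    ⟨h, by omega⟩
  have : Finite (G.induce ((↑X : Set V)ᶜ)).ConnectedComponent :=
    Nat.finite_of_card_ne_zero (by omega)
  obtain ⟨⟨a⟩, ⟨b⟩, hab⟩ := (Finite.one_lt_card_iff_nontrivial.mp hX).exists_pair_ne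
  replace hab : (a : V) ≠ b := fun h => hab (congrArg _ (Subtype.ext h))
  rcases le_or_gt 2 X.card with hX2 | hX2
  · obtain ⟨u, hu, v, hv, huv⟩ := Finset.one_lt_card.mp hX2
    obtain ⟨p, hp⟩ := hG u v huv
    simpa [hv, Finset.card_erase_of_mem hu] using hp.card_connectedComponent_induce_compl_le X
  · obtain ⟨u, hua, hXu⟩ : ∃ u, u ≠ (a : V) ∧ X.erase u = ∅ := by
      rcases X.eq_empty_or_nonempty with rfl | ⟨x, hx⟩
      · exact ⟨b, hab.symm, Finset.erase_empty _⟩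
      · refine ⟨x, fun h => a.2 (h ▸ hx), Finset.card_eq_zero.mp ?_⟩
        rw [Finset.card_erase_of_mem hx]
        omega
    obtain ⟨p, hp⟩ := hG u a hua
    have := hp.card_connectedComponent_induce_compl_le X
    have ha : (a : V) ∉ X := a.2
    simp only [hXu, Finset.card_empty, ha, if_false] at this
    omega

/-- If `G` is hamiltonian-connected, then for every vertex set `X`
such that `G − X` has at least 2 connected components, the number of connected
components of `G − X` is at most `|X| − 1` (equivalently, strictly less than `|X|`). -/
theorem stmt_1 {V : Type*} [Fintype V] [DecidableEq V] (G : SimpleGraph V)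
    (hG : HamiltonianConnected G) (X : Finset V)
    (hX : 2 ≤ Nat.card (G.induce ((↑X : Set V)ᶜ)).ConnectedComponent) :
    Nat.card (G.induce ((↑X : Set V)ᶜ)).ConnectedComponent ≤ X.card - 1 ∧
      Nat.card (G.induce ((↑X : Set V)ᶜ)).ConnectedComponent < X.card :=
  stmt_1_general G hG X hX
end

section
/- Let G be a simple graph containing four distinct vertices u, v, w_1, w_2 such that uv, uw_1, vw_1, uw_2, vw_2 are all edges of G. Let G' be the graph obtained from G by deleting the edge uv, adding a new vertex z, and adding the edges uz, zv, zw_1, zw_2. Let x, y be distinct vertices of G with v ∉ {x, y}, and let C be a Hamiltonian cycle of the graph G' ∪ {xy} (obtained from G' by adding the edge xy if not already present) that contains the edge xy and the edge zv. Then G has a Hamiltonian path from x to y. (Indeed, C traverses a subpath ∗ z v with ∗ ∈ {w_1, w_2, u}; replacing this subpath by the edge ∗v, which is an edge of G, yields a Hamiltonian cycle C' of G ∪ {xy}, and C' − xy is a Hamiltonian path from x to y in G.) -/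
open SimpleGraph

/-- The graph `G'` obtained from `G` by deleting the edge `uv`, adding a new
vertex `z` (here `none : Option V`) and adding the edges `uz`, `zv`, `zw₁`, `zw₂`. -/
def subdivideEdge {V : Type*} (G : SimpleGraph V) (u v w₁ w₂ : V) :
    SimpleGraph (Option V) where
  Adj a b := match a, b with
    | some a, some b => G.Adj a b ∧ ¬(a = u ∧ b = v) ∧ ¬(a = v ∧ b = u)
    | some a, none => a = u ∨ a = v ∨ a = w₁ ∨ a = w₂
    | none, some b => b = u ∨ b = v ∨ b = w₁ ∨ b = w₂
    | none, none => False
  symm := by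
    constructor
    rintro (_ | a) (_ | b) h
    · exact h
    · exact h
    · exact h
    · exact ⟨h.1.symm, fun hc => h.2.2 ⟨hc.2, hc.1⟩, fun hc => h.2.1 ⟨hc.2, hc.1⟩⟩
  loopless := by
    constructor
    rintro (_ | a) h
    · exact h
    · exact G.loopless.irrefl a h.1

/-! Deleting the edge `zv` from `C` leaves a Hamiltonian path of `G' ∪ xy` from `z` to `v`. Its
first edge is `zs` with `s ∈ {u, w₁, w₂}`, and the rest is a Hamiltonian path of `G ∪ xy` from
`s` to `v` through `xy`. Closing it with the edge `sv` of `G` gives a Hamiltonian cycle of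
`G ∪ xy` through `xy`, and deleting `xy` from that cycle gives the required path of `G`. -/

namespace SimpleGraph.Walk

variable {α : Type*} {G : SimpleGraph α} {a b c : α}

lemma IsHamiltonianCycle.reverse [DecidableEq α] {p : G.Walk a a} (hp : p.IsHamiltonianCycle) :
    p.reverse.IsHamiltonianCycle := by
  have := hp.finite
  have := Fintype.ofFinite α
  rw [isHamiltonianCycle_iff_isCycle_and_length_eq] at hp ⊢
  exact ⟨hp.1.reverse, by rw [length_reverse, hp.2]⟩

lemma IsCycle.eq_snd_or_eq_penultimate_of_mem_edges {p : G.Walk b b} (hp : p.IsCycle)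
    (he : s(b, c) ∈ p.edges) : c = p.snd ∨ c = p.penultimate := by
  rw [← p.cons_tail_eq hp.not_nil, edges_cons, List.mem_cons] at he
  rcases he with he | he
  · exact Or.inl (Sym2.congr_right.mp he)
  · have hlen := hp.three_le_length
    have := hp.isPath_tail.eq_penultimate_of_mem_edges he
    simp only [penultimate, length_tail, getVert_tail] at this
    exact Or.inr (by rwa [show p.length - 1 - 1 + 1 = p.length - 1 by omega] at this)

lemma IsHamiltonianCycle.exists_isHamiltonian_deleteEdges_snd [DecidableEq α] {p : G.Walk b b}
    (hp : p.IsHamiltonianCycle) :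
    ∃ P : (G.deleteEdges {s(b, p.snd)}).Walk p.snd b, P.IsHamiltonian ∧
      ∀ e ∈ p.edges, e ≠ s(b, p.snd) → e ∈ P.edges := by
  have hcons := p.cons_tail_eq hp.not_nil
  have hnot : s(b, p.snd) ∉ p.tail.edges := by
    have := hp.isCycle
    rw [← hcons, cons_isCycle_iff] at this
    exact this.2
  refine ⟨p.tail.toDeleteEdges _ fun e he he' => hnot (Set.mem_singleton_iff.mp he' ▸ he),
    fun w => ?_, fun e he hne => ?_⟩
  · rw [support_transfer]
    exact hp.isHamiltonian_tail w
  · rw [← hcons, edges_cons, List.mem_cons] at he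
    rw [edges_transfer]
    exact he.resolve_left hne

theorem IsHamiltonianCycle.exists_isHamiltonian_deleteEdges [DecidableEq α] {C : G.Walk a a}
    (hC : C.IsHamiltonianCycle) (he : s(b, c) ∈ C.edges) :
    ∃ P : (G.deleteEdges {s(b, c)}).Walk c b, P.IsHamiltonian ∧
      ∀ e ∈ C.edges, e ≠ s(b, c) → e ∈ P.edges := by
  have hb := C.fst_mem_support_of_mem_edges he
  have hrot : ∀ e, e ∈ (C.rotate b hb).edges ↔ e ∈ C.edges :=
    fun e => (C.rotate_edges b hb).mem_iff
  have hD := hC.rotate hb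
  simp_rw [← hrot] at he ⊢
  generalize C.rotate b hb = D at hD he ⊢
  rcases hD.isCycle.eq_snd_or_eq_penultimate_of_mem_edges he with rfl | rfl
  · exact hD.exists_isHamiltonian_deleteEdges_snd
  · have := hD.reverse.exists_isHamiltonian_deleteEdges_snd
    simp_rw [edges_reverse, List.mem_reverse] at this
    rw [snd_reverse] at this
    exact this

lemma IsPath.notMem_edges_of_mem_support {p : G.Walk a b} (hp : p.IsPath) {w : α}
    (hw : w ∈ p.support) (hwa : w ≠ a) (hwb : w ≠ b) : s(a, b) ∉ p.edges := by
  intro he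
  rw [hp.eq_adj_toWalk_of_mem_edges he] at hw
  simp_all

lemma IsHamiltonian.isHamiltonianCycle_cons [DecidableEq α] {p : G.Walk b a}
    (hp : p.IsHamiltonian) (h : G.Adj a b) (he : s(a, b) ∉ p.edges) :
    (cons h p).IsHamiltonianCycle := by
  rw [isHamiltonianCycle_iff_isCycle_and_support_count_tail_eq_one, cons_isCycle_iff]
  exact ⟨⟨hp.isPath, he⟩, hp⟩

lemma IsHamiltonian.mapLe [DecidableEq α] {G' : SimpleGraph α} (h : G ≤ G') {p : G.Walk a b}
    (hp : p.IsHamiltonian) : (p.mapLe h).IsHamiltonian :=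
  IsHamiltonian.map (f := Hom.ofLE h) Function.bijective_id hp

theorem exists_map_comap_eq {β : Type*} {f : β → α} (hf : Function.Injective f) {a b : β}
    (p : G.Walk (f a) (f b)) (hp : ∀ w ∈ p.support, w ∈ Set.range f) :
    ∃ q : (G.comap f).Walk a b, q.map (Hom.comap f G) = p := by
  -- free endpoints, so that `induction` applies
  suffices ∀ {a' b' : α} (p : G.Walk a' b'), (∀ w ∈ p.support, w ∈ Set.range f) →
      ∃ (a b : β) (q : (G.comap f).Walk a b) (ha : f a = a') (hb : f b = b'),
        (q.map (Hom.comap f G)).copy ha hb = p by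
    obtain ⟨a', b', q, ha, hb, hq⟩ := this p hp
    obtain rfl := hf ha
    obtain rfl := hf hb
    exact ⟨q, hq⟩
  intro a' b' p hp
  induction p with
  | nil =>
    obtain ⟨a, rfl⟩ := hp _ (List.mem_singleton_self _)
    exact ⟨a, a, nil, rfl, rfl, rfl⟩
  | cons h p ih =>
    obtain ⟨c, d, q, rfl, rfl, rfl⟩ := ih fun w hw => hp w (List.mem_cons_of_mem _ hw)
    obtain ⟨a, rfl⟩ := hp _ List.mem_cons_self
    exact ⟨a, d, cons (show (G.comap f).Adj a c from h) q, rfl, rfl, rfl⟩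

lemma exists_isHamiltonian_comap_some [DecidableEq α] {K : SimpleGraph (Option α)} {s t : α}
    (h : K.Adj none (some s)) {p : K.Walk (some s) (some t)} (hp : (cons h p).IsHamiltonian) :
    ∃ q : (K.comap some).Walk s t, q.IsHamiltonian ∧ p.edges = q.edges.map (Sym2.map some) := by
  have hnd := hp.isPath.support_nodup
  rw [support_cons, List.nodup_cons] at hnd
  obtain ⟨q, hq⟩ := exists_map_comap_eq (Option.some_injective α) p
    fun w hw => Option.ne_none_iff_exists.mp (ne_of_mem_of_not_mem hw hnd.1)
  have hsupp : p.support = q.support.map some := hq ▸ support_map _ _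
  refine ⟨q, IsPath.isHamiltonian_of_mem (.mk' ?_) fun w => ?_, hq ▸ edges_map _ _⟩
  · rw [hsupp] at hnd
    exact hnd.2.of_map some
  · simpa [hsupp] using hp.mem_support (some w)

end SimpleGraph.Walk

section subdivideEdge

variable {V : Type*} {G : SimpleGraph V} {u v w₁ w₂ x y : V}

lemma comap_some_subdivideEdge_sup_le :
    (subdivideEdge G u v w₁ w₂ ⊔ fromEdgeSet {s(some x, some y)}).comap some ≤
      G ⊔ fromEdgeSet {s(x, y)} := by
  rintro a b (h | h)
  · exact Or.inl h.1
  · right; simpa [Sym2.eq_iff] using h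

lemma eq_of_subdivideEdge_sup_adj_none {s : V}
    (h : (subdivideEdge G u v w₁ w₂ ⊔ fromEdgeSet {s(some x, some y)}).Adj none (some s)) :
    s = u ∨ s = v ∨ s = w₁ ∨ s = w₂ := by
  rcases h with h | h
  · exact h
  · simp at h

theorem exists_isHamiltonianCycle_sup_of_subdivideEdge [DecidableEq V]
    (hdist : [u, v, w₁].Nodup) (huv : G.Adj u v) (hvw₁ : G.Adj v w₁) (hvw₂ : G.Adj v w₂)
    {a : Option V} {C : (subdivideEdge G u v w₁ w₂ ⊔ fromEdgeSet {s(some x, some y)}).Walk a a}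
    (hC : C.IsHamiltonianCycle) (hCxy : s(some x, some y) ∈ C.edges)
    (hCzv : s(none, some v) ∈ C.edges) :
    ∃ D : (G ⊔ fromEdgeSet {s(x, y)}).Walk v v, D.IsHamiltonianCycle ∧ s(x, y) ∈ D.edges := by
  obtain ⟨P, hP, hPC⟩ := hC.exists_isHamiltonian_deleteEdges (b := some v) (c := none)
    (Sym2.eq_swap (a := none) ▸ hCzv)
  cases P with
  | @cons _ m _ h p =>
  obtain ⟨s, rfl⟩ : ∃ s, m = some s := Option.ne_none_iff_exists'.mp (by rintro rfl; simp at h)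
  have hsv : s ≠ v := by
    rintro rfl
    exact h.2 (by simp [Sym2.eq_swap])
  have hGsv : G.Adj s v := by
    rcases eq_of_subdivideEdge_sup_adj_none h.1 with rfl | rfl | rfl | rfl
    exacts [huv, absurd rfl hsv, hvw₁.symm, hvw₂.symm]
  obtain ⟨q, hq, hedges⟩ := Walk.exists_isHamiltonian_comap_some h hP
  have hqxy : s(x, y) ∈ q.edges := by
    have := hPC _ hCxy (by simp)
    rw [Walk.edges_cons, hedges, List.mem_cons] at this
    obtain ⟨e, he, hmap⟩ := List.mem_map.mp (this.resolve_left (by simp))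
    rwa [Sym2.map.injective (Option.some_injective V) (hmap.trans (Sym2.map_mk ..).symm)] at he
  -- a third vertex `w` on `q` keeps the edge `sv` off `q`, so `sv` closes `q` into a cycle
  obtain ⟨w, hws, hwv⟩ : ∃ w, w ≠ s ∧ w ≠ v := by
    simp only [List.nodup_cons, List.mem_cons, List.not_mem_nil] at hdist
    by_cases hsu : s = u
    · exact ⟨w₁, by grind, by grind⟩
    · exact ⟨u, Ne.symm hsu, by grind⟩
  refine ⟨.cons (Or.inl hGsv.symm)
    (q.mapLe fun _ _ hadj => comap_some_subdivideEdge_sup_le (And.left hadj)),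
    (hq.mapLe _).isHamiltonianCycle_cons _ ?_, ?_⟩
  · rw [Walk.edges_mapLe_eq_edges, Sym2.eq_swap (a := v)]
    exact hq.isPath.notMem_edges_of_mem_support (hq.mem_support w) hws hwv
  · simp [hqxy]

end subdivideEdge

theorem stmt_5_general {V : Type*} [DecidableEq V] (G : SimpleGraph V) (u v w₁ w₂ : V)
    (hdist : [u, v, w₁, w₂].Nodup)
    (huv : G.Adj u v) (hvw₁ : G.Adj v w₁)
    (hvw₂ : G.Adj v w₂)
    (x y : V)
    (a : Option V)
    (C : (subdivideEdge G u v w₁ w₂ ⊔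
      fromEdgeSet {s((some x : Option V), some y)}).Walk a a)
    (hC : C.IsHamiltonianCycle)
    (hCxy : s((some x : Option V), some y) ∈ C.edges)
    (hCzv : s((none : Option V), some v) ∈ C.edges) :
    ∃ p : G.Walk x y, p.IsHamiltonian := by
  obtain ⟨D, hD, hDxy⟩ := exists_isHamiltonianCycle_sup_of_subdivideEdge
    (hdist.sublist (List.sublist_append_left [u, v, w₁] [w₂])) huv hvw₁ hvw₂ hC hCxy hCzv
  obtain ⟨P, hP, -⟩ :=
    hD.exists_isHamiltonian_deleteEdges (b := y) (c := x) (Sym2.eq_swap (a := x) ▸ hDxy)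
  have hle : (G ⊔ fromEdgeSet {s(x, y)}).deleteEdges {s(y, x)} ≤ G := fun a b h => by
    simp_all [Sym2.eq_swap]
  exact ⟨P.mapLe hle, hP.mapLe hle⟩

/-- let `G'` be the subdivision of the edge `uv` of `G` by a new
vertex `z = none` joined also to `w₁` and `w₂`. Let `x, y` be distinct vertices
of `G` with `v ∉ {x, y}`, and let `C` be a Hamiltonian cycle of `G' ∪ {xy}`
containing the edge `xy` and the edge `zv`. Then `G` has a Hamiltonian path
from `x` to `y`. -/
theorem stmt_5 {V : Type*} [DecidableEq V] (G : SimpleGraph V) (u v w₁ w₂ : V)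
    (hdist : [u, v, w₁, w₂].Nodup)
    (huv : G.Adj u v) (huw₁ : G.Adj u w₁) (hvw₁ : G.Adj v w₁)
    (huw₂ : G.Adj u w₂) (hvw₂ : G.Adj v w₂)
    (x y : V) (hxy : x ≠ y) (hvx : v ≠ x) (hvy : v ≠ y)
    (a : Option V)
    (C : (subdivideEdge G u v w₁ w₂ ⊔
      fromEdgeSet {s((some x : Option V), some y)}).Walk a a)
    (hC : C.IsHamiltonianCycle)
    (hCxy : s((some x : Option V), some y) ∈ C.edges)
    (hCzv : s((none : Option V), some v) ∈ C.edges) :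
    ∃ p : G.Walk x y, p.IsHamiltonian :=
  stmt_5_general G u v w₁ w₂ hdist huv hvw₁ hvw₂ x y a C hC hCxy hCzv
end
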